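/- Let a, b, r be positive integers. Then the polynomial [a]_q · [b]_{q^r} is unimodal if and only if a ≥ r(b − 1) or r divides a. -/

import Mathlib

/-!
Multiplying by `q - 1` telescopes `[a]_q` into `q^a - 1`, so the successive differences
`c_{k+1} - c_k` of the coefficients of `[a]_q [b]_{q^r}` are the coefficients of
`(1 - q^a) [b]_{q^r}`: a `+1` at every `rm` with `m < b`, a `-1` at every `a + rm` with `m < b`.
The first `-1` sits at `a`. If `r(b-1) ≤ a` every `+1` comes no later than `a` (and one at `a`
is cancelled), and if `r ∣ a` every `+1` beyond `a` is cancelled by a `-1`; either way the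
differences change sign once. Otherwise `r(⌊a/r⌋ + 1)` carries an uncancelled `+1` after the
`-1` at `a`.
-/

open Polynomial

/-- The q-analog `[n]_q = 1 + q + ⋯ + q^(n-1)` as a polynomial in `ℤ[q]`. -/
noncomputable def qAnalog (n : ℕ) : Polynomial ℤ :=
  ∑ i ∈ Finset.range n, X ^ i

/-- The q-analog `[n]_{q^r} = 1 + q^r + ⋯ + q^(r(n-1))` as a polynomial in `ℤ[q]`. -/
noncomputable def qAnalogPow (n r : ℕ) : Polynomial ℤ :=
  ∑ i ∈ Finset.range n, X ^ (r * i)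

/-- A polynomial of degree `d` is symmetric if `c_k = c_{d-k}` for all `0 ≤ k ≤ d`. -/
def IsSymmPoly (P : Polynomial ℤ) : Prop :=
  ∀ k ≤ P.natDegree, P.coeff k = P.coeff (P.natDegree - k)

/-- A polynomial is unimodal if its coefficient sequence increases up to some
index `M` and decreases afterwards. -/
def IsUnimodalPoly (P : Polynomial ℤ) : Prop :=
  ∃ M : ℕ, (∀ k, k < M → P.coeff k ≤ P.coeff (k + 1)) ∧
    (∀ k, M ≤ k → P.coeff (k + 1) ≤ P.coeff k)

theorem not_isUnimodalPoly_of_lt_of_lt {P : ℤ[X]} {i j : ℕ} (hij : i < j)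
    (hdesc : P.coeff (i + 1) < P.coeff i) (hasc : P.coeff j < P.coeff (j + 1)) :
    ¬ IsUnimodalPoly P := by
  rintro ⟨M, hinc, hdec⟩
  rcases lt_or_ge i M with hiM | hMi
  · exact (hinc i hiM).not_gt hdesc
  · exact (hdec j (hMi.trans hij.le)).not_gt hasc

theorem coeff_qAnalog (n m : ℕ) : (qAnalog n).coeff m = if m < n then 1 else 0 := by
  simp [qAnalog, finsetSum_coeff, coeff_X_pow]

theorem qAnalogPow_eq_expand (b r : ℕ) : qAnalogPow b r = expand ℤ r (qAnalog b) := by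
  simp [qAnalogPow, qAnalog, pow_mul]

theorem coeff_qAnalogPow {r : ℕ} (hr : 0 < r) (b n : ℕ) :
    (qAnalogPow b r).coeff n = if r ∣ n ∧ n / r < b then 1 else 0 := by
  rw [qAnalogPow_eq_expand, coeff_expand hr, coeff_qAnalog, ite_and]

theorem coeff_qAnalogPow_nonneg (b r n : ℕ) : 0 ≤ (qAnalogPow b r).coeff n := by
  rw [qAnalogPow, finsetSum_coeff]
  exact Finset.sum_nonneg fun i _ => by rw [coeff_X_pow]; positivity

theorem coeff_qAnalog_mul_succ (a : ℕ) (Q : ℤ[X]) (k : ℕ) :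
    (qAnalog a * Q).coeff (k + 1) =
      (qAnalog a * Q).coeff k + Q.coeff (k + 1) - (X ^ a * Q).coeff (k + 1) := by
  have htelescope : qAnalog a * Q * (X - 1) = (X ^ a - 1) * Q := by
    rw [mul_right_comm, qAnalog, geom_sum_mul]
  have := congrArg (coeff · (k + 1)) htelescope
  simp only [mul_sub, sub_mul, mul_one, one_mul, coeff_sub, coeff_mul_X] at this
  linarith

/-- The support `{rm | m < b}` of `[b]_{q^r}` is closed under `n ↦ n - a` on `n ≥ a`. -/
theorem coeff_qAnalogPow_le_coeff_sub {a b r n : ℕ} (hr : 0 < r) (han : a ≤ n)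
    (h : r * (b - 1) ≤ a ∨ r ∣ a) :
    (qAnalogPow b r).coeff n ≤ (qAnalogPow b r).coeff (n - a) := by
  have hsupp : r ∣ n ∧ n / r < b → r ∣ n - a ∧ (n - a) / r < b := by
    rintro ⟨⟨m, rfl⟩, hmb⟩
    rw [Nat.mul_div_cancel_left m hr] at hmb
    rcases h with hle | hdvd
    · have : r * m ≤ r * (b - 1) := Nat.mul_le_mul_left r (by omega)
      rw [show r * m - a = 0 by omega]
      simp [hmb.trans_le' (Nat.zero_le m)]
    · exact ⟨Nat.dvd_sub (dvd_mul_right r m) hdvd,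
        (Nat.div_le_div_right (Nat.sub_le _ _)).trans_lt (by rwa [Nat.mul_div_cancel_left m hr])⟩
  rw [coeff_qAnalogPow hr, coeff_qAnalogPow hr]
  split_ifs with hn hna
  exacts [le_rfl, absurd (hsupp hn) hna, zero_le_one, le_rfl]

theorem isUnimodalPoly_qAnalog_mul_qAnalogPow {a b r : ℕ} (hr : 0 < r)
    (h : r * (b - 1) ≤ a ∨ r ∣ a) : IsUnimodalPoly (qAnalog a * qAnalogPow b r) := by
  refine ⟨a - 1, fun k hk => ?_, fun k hk => ?_⟩ <;> rw [coeff_qAnalog_mul_succ, coeff_X_pow_mul']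
  · rw [if_neg (by omega)]
    linarith [coeff_qAnalogPow_nonneg b r (k + 1)]
  · rw [if_pos (by omega)]
    linarith [coeff_qAnalogPow_le_coeff_sub hr (by omega : a ≤ k + 1) h]

theorem not_isUnimodalPoly_qAnalog_mul_qAnalogPow {a b r : ℕ} (hr : 0 < r)
    (hlt : a < r * (b - 1)) (hdvd : ¬ r ∣ a) : ¬ IsUnimodalPoly (qAnalog a * qAnalogPow b r) := by
  have han : a < r * (a / r + 1) := Nat.lt_mul_div_succ a hr
  have hab : a / r + 1 < b := by
    have : a / r < b - 1 := Nat.lt_of_mul_lt_mul_left ((Nat.mul_div_le a r).trans_lt hlt)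
    exact Nat.add_lt_of_lt_sub this
  have hna : ¬ r ∣ r * (a / r + 1) - a := fun h => hdvd <| by
    rw [← Nat.sub_sub_self han.le]
    exact Nat.dvd_sub (dvd_mul_right r _) h
  obtain ⟨i, hi⟩ := Nat.exists_eq_add_one_of_ne_zero fun ha : a = 0 => hdvd (ha ▸ dvd_zero r)
  obtain ⟨j, hj⟩ : ∃ j, j + 1 = r * (a / r + 1) := ⟨_, Nat.sub_add_cancel (by omega)⟩
  refine not_isUnimodalPoly_of_lt_of_lt (i := i) (j := j) (by omega) ?_ ?_ <;>
    rw [coeff_qAnalog_mul_succ, coeff_X_pow_mul']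
  · rw [← hi, if_pos le_rfl, Nat.sub_self, coeff_qAnalogPow hr, coeff_qAnalogPow hr]
    simp [hdvd, Nat.zero_lt_of_lt hab]
  · rw [hj, if_pos han.le, coeff_qAnalogPow hr, coeff_qAnalogPow hr]
    simp [hna, Nat.mul_div_cancel_left _ hr, hab]

theorem qAnalog_mul_qAnalogPow_unimodal_iff_general (a b r : ℕ)
    (hr : 1 ≤ r) :
    IsUnimodalPoly (qAnalog a * qAnalogPow b r) ↔ (r * (b - 1) ≤ a ∨ r ∣ a) := by
  refine ⟨fun hU => ?_, isUnimodalPoly_qAnalog_mul_qAnalogPow hr⟩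
  by_contra! h
  exact not_isUnimodalPoly_qAnalog_mul_qAnalogPow hr h.1 h.2 hU

theorem qAnalog_mul_qAnalogPow_unimodal_iff (a b r : ℕ)
    (ha : 1 ≤ a) (hb : 1 ≤ b) (hr : 1 ≤ r) :
    IsUnimodalPoly (qAnalog a * qAnalogPow b r) ↔ (r * (b - 1) ≤ a ∨ r ∣ a) :=
  qAnalog_mul_qAnalogPow_unimodal_iff_general a b r hr
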